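/- The polynomials P_m^p of the generalized Chacon automorphism are palindromic: for every m ≥ 0 and every j with 0 ≤ j ≤ m(p−2), one has π_m(j) = π_m(m(p−2) − j); equivalently, t^{m(p−2)} · P_m^p(1/t) = P_m^p(t). -/

import Mathlib

/-! Write `C` for the digitwise complement `x_i ↦ p - 1 - x_i`. On `Γ*` one has
`S (C (S x)) = C x` and `φ (C (S x)) = p - 2 - φ x`, so the orbit of `C (S^m x)` is the orbit of
`x` read backwards and complemented, whence `φ^(m) x + φ^(m) (C (S^m x)) = m (p - 2)`.
It remains to see that `C ∘ S^m` preserves `λ`. Realising `λ` as the law of the base-`p` digits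
of a uniform point of `[0, 1)`, `S` becomes a translation on each interval of points whose
expansion begins with exactly `i` digits `p - 1`, hence preserves Lebesgue measure, and `C`
becomes `u ↦ 1 - u` off the countably many `p`-adic rationals. -/

open MeasureTheory
open scoped NNReal ENNReal

namespace Chacon

/-- The space of digit sequences with digits in `{0, …, p-1}`. -/
def Gamma (p : ℕ) : Set (ℕ → ℕ) := {x | ∀ i, x i < p}

/-- `Γ*`: sequences with digits `< p` having infinitely many coordinates `≠ p - 1`. -/
def GammaStar (p : ℕ) : Set (ℕ → ℕ) :=
  {x | (∀ i, x i < p) ∧ {i | x i ≠ p - 1}.Infinite}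

/-- The least index `i` with `x i ≠ p - 1`. -/
noncomputable def firstNot (p : ℕ) (x : ℕ → ℕ) : ℕ :=
  sInf {i | x i ≠ p - 1}

/-- `φ(x) = x_i` where `i` is the least index with `x_i ≠ p - 1`. -/
noncomputable def phi (p : ℕ) (x : ℕ → ℕ) : ℕ :=
  x (firstNot p x)

/-- The odometer `S` (addition of `1` with carry): the initial run of digits
`p - 1` is replaced by zeros, and the first digit `≠ p - 1` is increased by one. -/
noncomputable def odo (p : ℕ) (x : ℕ → ℕ) : ℕ → ℕ :=
  fun i =>
    if i < firstNot p x then 0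
    else if i = firstNot p x then x i + 1
    else x i

/-- `φ^(m)(x) = ∑_{j=0}^{m-1} φ(S^j x)`. -/
noncomputable def phiSum (p m : ℕ) (x : ℕ → ℕ) : ℕ :=
  ∑ j ∈ Finset.range m, phi p ((odo p)^[j] x)

/-- The base-`p` digit sequence of a real number `u`. -/
noncomputable def digitsOf (p : ℕ) (u : ℝ) : ℕ → ℕ :=
  fun i => (⌊u * (p : ℝ) ^ (i + 1)⌋).toNat % p

/-- `λ`: the product probability measure on digit sequences under which the
coordinates are i.i.d., uniformly distributed in `{0, …, p-1}`; it is realized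
concretely as the distribution of the base-`p` digit sequence of a uniformly
distributed random point of `[0,1)`. -/
noncomputable def lam (p : ℕ) : Measure (ℕ → ℕ) :=
  Measure.map (digitsOf p) (volume.restrict (Set.Ico (0 : ℝ) 1))

/-- `π_m(j) = λ({x : φ^(m)(x) = j})`. -/
noncomputable def pim (p m j : ℕ) : ℝ≥0∞ :=
  lam p {x | phiSum p m x = j}

/-- `P_m^p(t) = ∑_{j ≥ 0} π_m(j) t^j`, a real polynomial
(the sum is over `0 ≤ j ≤ m (p-2)` since `0 ≤ φ^(m) ≤ m (p-2)` a.s.). -/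
noncomputable def P (p m : ℕ) (t : ℝ) : ℝ :=
  ∑ j ∈ Finset.range (m * (p - 2) + 1), (pim p m j).toReal * t ^ j

/-- The `n`-th triangular number `Δ_n = n (n+1) / 2`. -/
def tri (n : ℕ) : ℕ := n * (n + 1) / 2

/-- The degree `D_m` of `P_m^p`: the largest `j` with `π_m(j) ≠ 0`. -/
noncomputable def D (p m : ℕ) : ℕ := sSup {j | pim p m j ≠ 0}

/-- The lower degree `d_m` of `P_m^p`: the least `j` with `π_m(j) ≠ 0`. -/
noncomputable def d (p m : ℕ) : ℕ := sInf {j | pim p m j ≠ 0}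

open Set
open scoped Function

lemma measurePreserving_map_of_ae_semiconj {α β : Type*} [MeasurableSpace α]
    [MeasurableSpace β] {μ : Measure α} {f : α → β} {T : α → α} {F : β → β}
    (hf : Measurable f) (hF : Measurable F) (hT : MeasurePreserving T μ μ)
    (hsemiconj : f ∘ T =ᵐ[μ] F ∘ f) : MeasurePreserving F (μ.map f) (μ.map f) :=
  ⟨hF, by rw [Measure.map_map hF hf, ← Measure.map_congr hsemiconj,
    ← Measure.map_map hf hT.measurable, hT.map_eq]⟩

section Odometer

variable {p : ℕ} {x : ℕ → ℕ}

def digitCompl (p : ℕ) (x : ℕ → ℕ) : ℕ → ℕ := fun i => p - 1 - x i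

lemma firstNot_eq {i : ℕ} (hi : x i ≠ p - 1) (hlt : ∀ k < i, x k = p - 1) :
    firstNot p x = i :=
  le_antisymm (Nat.sInf_le hi)
    (not_lt.1 fun h => Nat.sInf_mem (s := {k | x k ≠ p - 1}) ⟨i, hi⟩ (hlt _ h))

lemma eq_of_lt_firstNot {k : ℕ} (hk : k < firstNot p x) : x k = p - 1 :=
  not_not.1 (Nat.notMem_of_lt_sInf hk)

lemma apply_firstNot_lt (hx : x ∈ GammaStar p) : x (firstNot p x) < p - 1 := by
  have : x (firstNot p x) ≠ p - 1 := Nat.sInf_mem hx.2.nonempty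
  have := hx.1 (firstNot p x)
  omega

lemma phi_le (hx : x ∈ GammaStar p) : phi p x ≤ p - 2 := by
  have := apply_firstNot_lt hx; unfold phi; omega

lemma odo_apply_of_lt {k : ℕ} (hk : k < firstNot p x) : odo p x k = 0 := if_pos hk

lemma odo_apply_firstNot : odo p x (firstNot p x) = x (firstNot p x) + 1 := by
  simp [odo]

lemma odo_apply_of_gt {k : ℕ} (hk : firstNot p x < k) : odo p x k = x k := by
  simp [odo, hk.ne', hk.not_gt]

lemma mapsTo_odo : MapsTo (odo p) (GammaStar p) (GammaStar p) := by
  intro x hx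
  refine ⟨fun k => ?_, ?_⟩
  · rcases lt_trichotomy k (firstNot p x) with hk | rfl | hk
    · rw [odo_apply_of_lt hk]; have := hx.1 k; omega
    · rw [odo_apply_firstNot]; have := apply_firstNot_lt hx; omega
    · rw [odo_apply_of_gt hk]; exact hx.1 k
  · refine (hx.2.sdiff (finite_Iic (firstNot p x))).mono fun k hk => ?_
    have hk' : firstNot p x < k := not_le.1 hk.2
    simpa [odo_apply_of_gt hk'] using hk.1

lemma firstNot_digitCompl_odo (hx : x ∈ GammaStar p) :
    firstNot p (digitCompl p (odo p x)) = firstNot p x := by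
  apply firstNot_eq
  · simp only [digitCompl, odo_apply_firstNot]; have := apply_firstNot_lt hx; omega
  · intro k hk; simp [digitCompl, odo_apply_of_lt hk]

lemma phi_digitCompl_odo (hx : x ∈ GammaStar p) :
    phi p (digitCompl p (odo p x)) = p - 2 - phi p x := by
  simp only [phi, firstNot_digitCompl_odo hx, digitCompl, odo_apply_firstNot]
  omega

lemma odo_digitCompl_odo (hx : x ∈ GammaStar p) :
    odo p (digitCompl p (odo p x)) = digitCompl p x := by
  funext k
  have hfirst := firstNot_digitCompl_odo hx
  rcases lt_trichotomy k (firstNot p x) with hk | rfl | hk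
  · rw [odo_apply_of_lt (hfirst ▸ hk)]; simp [digitCompl, eq_of_lt_firstNot hk]
  · conv_lhs => rw [← hfirst, odo_apply_firstNot, hfirst]
    simp only [digitCompl, odo_apply_firstNot]; have := apply_firstNot_lt hx; omega
  · rw [odo_apply_of_gt (hfirst ▸ hk)]; simp [digitCompl, odo_apply_of_gt hk]

lemma iterate_odo_digitCompl_iterate_odo (hx : x ∈ GammaStar p) {m j : ℕ} (hj : j ≤ m) :
    (odo p)^[j] (digitCompl p ((odo p)^[m] x)) = digitCompl p ((odo p)^[m - j] x) := by
  induction j with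
  | zero => rfl
  | succ j ih =>
    rw [Function.iterate_succ_apply', ih (by omega), show m - j = (m - (j + 1)) + 1 by omega,
      Function.iterate_succ_apply', odo_digitCompl_odo (mapsTo_odo.iterate _ hx)]

lemma phiSum_add_phiSum_digitCompl (hx : x ∈ GammaStar p) (m : ℕ) :
    phiSum p m x + phiSum p m (digitCompl p ((odo p)^[m] x)) = m * (p - 2) := by
  have hterm : ∀ j ∈ Finset.range m, phi p ((odo p)^[j] (digitCompl p ((odo p)^[m] x))) =
      p - 2 - phi p ((odo p)^[m - 1 - j] x) := by
    intro j hj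
    have hj := Finset.mem_range.1 hj
    rw [iterate_odo_digitCompl_iterate_odo hx hj.le,
      show m - j = (m - 1 - j) + 1 by omega, Function.iterate_succ_apply',
      phi_digitCompl_odo (mapsTo_odo.iterate _ hx)]
  rw [phiSum, phiSum, Finset.sum_congr rfl hterm, ← Finset.sum_range_reflect,
    ← Finset.sum_add_distrib, Finset.sum_congr rfl fun j _ =>
      Nat.add_sub_cancel' (phi_le (mapsTo_odo.iterate (m - 1 - j) hx))]
  simp

end Odometer

section Measurability

variable {p : ℕ}

lemma measurable_firstNot : Measurable (firstNot p) := by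
  classical
  have hex : ∀ x : ℕ → ℕ, ∃ i, x i ≠ p - 1 ∨ ∀ k, x k = p - 1 := fun x => by
    by_cases h : ∀ k, x k = p - 1
    · exact ⟨0, Or.inr h⟩
    · exact (not_forall.1 h).imp fun _ => Or.inl
  have hfind : firstNot p = fun x => Nat.find (hex x) := by
    funext x
    apply le_antisymm
    · obtain h | h := Nat.find_spec (hex x)
      · exact Nat.sInf_le h
      · simp [firstNot, h]
    · refine Nat.find_min' _ ?_
      by_cases h : ∀ k, x k = p - 1
      · exact Or.inr h
      · exact Or.inl (Nat.sInf_mem (not_forall.1 h))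
  rw [hfind]
  exact measurable_find hex fun i => by measurability

lemma measurable_phi : Measurable (phi p) :=
  (measurable_from_prod_countable_left measurable_pi_apply :
    Measurable fun q : (ℕ → ℕ) × ℕ => q.1 q.2).comp (measurable_id.prodMk measurable_firstNot)

lemma measurable_odo : Measurable (odo p) :=
  measurable_pi_lambda _ fun k => (measurable_of_countable
    (fun q : ℕ × ℕ => if k < q.1 then 0 else if k = q.1 then q.2 + 1 else q.2)).comp
    (measurable_firstNot.prodMk (measurable_pi_apply k))

lemma measurable_phiSum (m : ℕ) : Measurable (phiSum p m) :=
  Finset.measurable_sum _ fun j _ => measurable_phi.comp (measurable_odo.iterate j)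

lemma measurable_digitCompl : Measurable (digitCompl p) :=
  measurable_pi_lambda _ fun i => (measurable_of_countable (p - 1 - ·)).comp (measurable_pi_apply i)

lemma measurable_digitsOf : Measurable (digitsOf p) :=
  measurable_pi_lambda _ fun _ => (measurable_of_countable (fun z : ℤ => z.toNat % p)).comp
    (Int.measurable_floor.comp (measurable_id.mul_const _))

end Measurability

section Digits

variable {p : ℕ} {u : ℝ}

lemma digitsOf_eq_floor_sub (hp : 0 < p) (hu : 0 ≤ u) (k : ℕ) :
    (digitsOf p u k : ℤ) = ⌊u * (p : ℝ) ^ (k + 1)⌋ - p * ⌊u * (p : ℝ) ^ k⌋ := by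
  have hfloor : ⌊u * (p : ℝ) ^ (k + 1)⌋ / p = ⌊u * (p : ℝ) ^ k⌋ := by
    rw [← Int.floor_div_natCast, pow_succ, ← mul_assoc, mul_div_cancel_right₀ _ (by positivity)]
  have hnonneg : 0 ≤ ⌊u * (p : ℝ) ^ (k + 1)⌋ := Int.floor_nonneg.2 (by positivity)
  rw [← hfloor, digitsOf, Int.natCast_mod, Int.toNat_of_nonneg hnonneg, Int.emod_def]

lemma floor_mul_pow_add_one_of_digits_eq (hp : 0 < p) (hu : 0 ≤ u) {K n : ℕ}
    (h : ∀ k, K ≤ k → k < K + n → digitsOf p u k = p - 1) :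
    ⌊u * (p : ℝ) ^ (K + n)⌋ + 1 = p ^ n * (⌊u * (p : ℝ) ^ K⌋ + 1) := by
  induction n with
  | zero => simp
  | succ n ih =>
    have hdigit := digitsOf_eq_floor_sub hp hu (K + n)
    rw [h (K + n) (by omega) (by omega), Nat.cast_sub hp, Nat.cast_one] at hdigit
    have hprev := ih fun k hK hk => h k hK (by omega)
    rw [← add_assoc]
    linear_combination -hdigit + (p : ℤ) * hprev

lemma digitsOf_mem_gammaStar (hp : 1 < p) (hu : u ∈ Ico 0 1) : digitsOf p u ∈ GammaStar p := by
  refine ⟨fun k => Nat.mod_lt _ (by omega), fun hfin => ?_⟩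
  obtain ⟨K, hK⟩ := hfin.bddAbove
  set x := u * (p : ℝ) ^ (K + 1)
  have hgap : 0 < (⌊x⌋ + 1 : ℝ) - x := by linarith [Int.lt_floor_add_one x]
  obtain ⟨n, hn⟩ := pow_unbounded_of_one_lt ((⌊x⌋ + 1 : ℝ) - x)⁻¹ (Nat.one_lt_cast.2 hp)
  rw [inv_lt_iff_one_lt_mul₀ hgap] at hn
  have hrun := floor_mul_pow_add_one_of_digits_eq (p := p) (by omega) hu.1 (K := K + 1) (n := n)
    fun k hk _ => by by_contra hne; exact absurd (hK hne) (by omega)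
  rw [pow_add, ← mul_assoc] at hrun
  have hfloor := Int.floor_le (x * (p : ℝ) ^ n)
  rw [eq_sub_of_add_eq hrun] at hfloor
  push_cast at hfloor
  linarith

def carryInterval (p i : ℕ) : Set ℝ := Ico (1 - (p : ℝ)⁻¹ ^ i) (1 - (p : ℝ)⁻¹ ^ (i + 1))

lemma floor_mul_pow_firstNot_add_one (hp : 0 < p) (hu : u ∈ Ico 0 1) :
    ⌊u * (p : ℝ) ^ firstNot p (digitsOf p u)⌋ + 1 = (p : ℤ) ^ firstNot p (digitsOf p u) := by
  have := floor_mul_pow_add_one_of_digits_eq hp hu.1 (K := 0) (n := firstNot p (digitsOf p u))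
    fun k _ hk => eq_of_lt_firstNot (by simpa using hk)
  simpa [Int.floor_eq_zero_iff.2 hu] using this

lemma mem_carryInterval_firstNot (hp : 1 < p) (hu : u ∈ Ico 0 1) :
    u ∈ carryInterval p (firstNot p (digitsOf p u)) := by
  set i := firstNot p (digitsOf p u)
  have hrun := floor_mul_pow_firstNot_add_one (Nat.zero_lt_of_lt hp) hu
  have hdigit := digitsOf_eq_floor_sub (Nat.zero_lt_of_lt hp) hu.1 i
  have hlt : (digitsOf p u i : ℤ) + 2 ≤ p := by
    have : digitsOf p u i < p - 1 := apply_firstNot_lt (digitsOf_mem_gammaStar hp hu)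
    omega
  have hnext : ⌊u * (p : ℝ) ^ (i + 1)⌋ + 2 ≤ (p : ℤ) ^ (i + 1) := by
    rw [pow_succ (p : ℤ)]; linear_combination hlt - hdigit + (p : ℤ) * hrun
  have hlow := Int.floor_le (u * (p : ℝ) ^ i)
  have hhigh := Int.lt_floor_add_one (u * (p : ℝ) ^ (i + 1))
  rw [eq_sub_of_add_eq hrun] at hlow
  have hnext' : (⌊u * (p : ℝ) ^ (i + 1)⌋ : ℝ) + 2 ≤ (p : ℝ) ^ (i + 1) := by exact_mod_cast hnext
  push_cast at hlow
  have hpq : ∀ n, (p : ℝ) ^ n * (p : ℝ)⁻¹ ^ n = 1 := fun n => by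
    rw [← mul_pow, mul_inv_cancel₀ (by positivity), one_pow]
  unfold carryInterval
  constructor
  · nlinarith [hpq i, (by positivity : (0 : ℝ) ≤ (p : ℝ)⁻¹ ^ i)]
  · nlinarith [hpq (i + 1), (by positivity : (0 : ℝ) < (p : ℝ)⁻¹ ^ (i + 1))]

lemma pairwise_disjoint_carryInterval : Pairwise (Disjoint on carryInterval p) :=
  Monotone.pairwise_disjoint_on_Ico_succ (f := fun i => 1 - (p : ℝ)⁻¹ ^ i) fun _ _ hij =>
    sub_le_sub_left (pow_right_anti₀ (by positivity) (Nat.cast_inv_le_one p) hij) 1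

lemma carryInterval_subset (i : ℕ) : carryInterval p i ⊆ Ico 0 1 := by
  intro u hu
  have := pow_le_one₀ (inv_nonneg.2 (Nat.cast_nonneg (α := ℝ) p)) (Nat.cast_inv_le_one p) (n := i)
  have : (0 : ℝ) ≤ (p : ℝ)⁻¹ ^ (i + 1) := by positivity
  exact ⟨by linarith [hu.1], by linarith [hu.2]⟩

lemma firstNot_digitsOf_of_mem_carryInterval (hp : 1 < p) {i : ℕ} (hu : u ∈ carryInterval p i) :
    firstNot p (digitsOf p u) = i := by
  by_contra hne
  exact (pairwise_disjoint_carryInterval hne).le_bot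
    ⟨mem_carryInterval_firstNot hp (carryInterval_subset i hu), hu⟩

/-- On `carryInterval p i` adding one with carry clears the leading run of `i` digits `p - 1`,
subtracting `1 - p⁻¹ ^ i`, and raises the next digit by one, adding `p⁻¹ ^ (i + 1)`. -/
noncomputable def carryShift (p i : ℕ) : ℝ := (p : ℝ)⁻¹ ^ i + (p : ℝ)⁻¹ ^ (i + 1) - 1

noncomputable def realOdo (p : ℕ) (u : ℝ) : ℝ := u + carryShift p (firstNot p (digitsOf p u))

lemma realOdo_eq_of_mem_carryInterval (hp : 1 < p) {i : ℕ} (hu : u ∈ carryInterval p i) :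
    realOdo p u = u + carryShift p i := by
  rw [realOdo, firstNot_digitsOf_of_mem_carryInterval hp hu]

lemma add_carryShift_mem_Ico_iff {i : ℕ} :
    u + carryShift p i ∈ Ico ((p : ℝ)⁻¹ ^ (i + 1)) ((p : ℝ)⁻¹ ^ i) ↔ u ∈ carryInterval p i := by
  simp only [mem_Ico, carryInterval, carryShift]
  constructor <;> rintro ⟨h₁, h₂⟩ <;> constructor <;> linarith

lemma floor_mul_pow_eq_zero (hp : 0 < p) {v : ℝ} {i k : ℕ} (hv : v ∈ Ico 0 ((p : ℝ)⁻¹ ^ i))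
    (hk : k ≤ i) : ⌊v * (p : ℝ) ^ k⌋ = 0 := by
  refine Int.floor_eq_zero_iff.2 ⟨mul_nonneg hv.1 (by positivity), ?_⟩
  calc v * (p : ℝ) ^ k < (p : ℝ)⁻¹ ^ k * (p : ℝ) ^ k := by
        gcongr
        exact hv.2.trans_le (pow_le_pow_of_le_one (by positivity) (Nat.cast_inv_le_one p) hk)
    _ = 1 := by rw [← mul_pow, inv_mul_cancel₀ (by positivity), one_pow]

lemma floor_add_carryShift_mul_pow (hp : 0 < p) (u : ℝ) (i e : ℕ) :
    ⌊(u + carryShift p i) * (p : ℝ) ^ (i + 1 + e)⌋ =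
      ⌊u * (p : ℝ) ^ (i + 1 + e)⌋ + ((p : ℤ) ^ (e + 1) + (p : ℤ) ^ e - (p : ℤ) ^ (i + 1 + e)) := by
  rw [← Int.floor_add_intCast, carryShift]
  congr 1
  have : (p : ℝ) ≠ 0 := by positivity
  push_cast
  simp only [inv_pow]
  field_simp
  ring

lemma digitsOf_realOdo (hp : 1 < p) (hu : u ∈ Ico 0 1) :
    digitsOf p (realOdo p u) = odo p (digitsOf p u) := by
  have hp0 : 0 < p := Nat.zero_lt_of_lt hp
  set i := firstNot p (digitsOf p u)
  have hv := add_carryShift_mem_Ico_iff.2 (mem_carryInterval_firstNot hp hu)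
  have hv0 : 0 ≤ realOdo p u := (pow_nonneg (by positivity) _).trans hv.1
  have hsmall : ∀ k ≤ i, ⌊realOdo p u * (p : ℝ) ^ k⌋ = 0 :=
    fun k hk => floor_mul_pow_eq_zero hp0 ⟨hv0, hv.2⟩ hk
  have hlarge := floor_add_carryShift_mul_pow hp0 u i
  funext k
  suffices (digitsOf p (realOdo p u) k : ℤ) = odo p (digitsOf p u) k by exact_mod_cast this
  rw [digitsOf_eq_floor_sub hp0 hv0]
  rcases lt_trichotomy k i with hk | rfl | hk
  · rw [odo_apply_of_lt hk, hsmall k hk.le, hsmall (k + 1) hk]; simp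
  · have hnext := hlarge 0
    simp only [add_zero, pow_zero, zero_add, pow_one] at hnext
    rw [odo_apply_firstNot, realOdo, hnext, ← realOdo, hsmall _ le_rfl]
    push_cast
    linear_combination
      -digitsOf_eq_floor_sub hp0 hu.1 _ + (p : ℤ) * floor_mul_pow_firstNot_add_one hp0 hu
  · obtain ⟨e, rfl⟩ : ∃ e, k = i + 1 + e := ⟨k - (i + 1), by omega⟩
    have hnext := hlarge (e + 1)
    rw [← add_assoc] at hnext
    rw [odo_apply_of_gt hk, realOdo, hnext, hlarge e, digitsOf_eq_floor_sub hp0 hu.1]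
    ring

lemma digitsOf_one_sub (hp : 0 < p) (hu : u ∈ Icc 0 1)
    (hirr : ∀ k : ℕ, u * (p : ℝ) ^ k ∉ range ((↑) : ℤ → ℝ)) :
    digitsOf p (1 - u) = digitCompl p (digitsOf p u) := by
  have hfloor : ∀ k, ⌊(1 - u) * (p : ℝ) ^ k⌋ = (p : ℤ) ^ k - ⌊u * (p : ℝ) ^ k⌋ - 1 := fun k => by
    rw [show (1 - u) * (p : ℝ) ^ k = (((p : ℤ) ^ k : ℤ) : ℝ) + -(u * (p : ℝ) ^ k) by
        push_cast; ring,
      Int.floor_intCast_add, Int.floor_neg, (Int.ceil_eq_floor_add_one_iff_notMem _).2 (hirr k)]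
    ring
  funext k
  suffices (digitsOf p (1 - u) k : ℤ) = digitCompl p (digitsOf p u) k by exact_mod_cast this
  have hdigit := digitsOf_eq_floor_sub hp hu.1 k
  have hlt : digitsOf p u k < p := Nat.mod_lt _ hp
  rw [digitsOf_eq_floor_sub hp (sub_nonneg.2 hu.2), hfloor, hfloor, digitCompl,
    Nat.cast_sub (by omega), Nat.cast_sub hp, pow_succ]
  push_cast
  linear_combination hdigit

end Digits

section Lebesgue

variable {p : ℕ}

lemma iUnion_Ico_pow_succ_pow {q : ℝ} (hq₀ : 0 < q) (hq₁ : q < 1) :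
    ⋃ i : ℕ, Ico (q ^ (i + 1)) (q ^ i) = Ioo 0 1 := by
  ext v
  simp only [mem_iUnion, mem_Ico, mem_Ioo]
  constructor
  · rintro ⟨i, hlow, hhigh⟩
    exact ⟨(pow_pos hq₀ _).trans_le hlow, hhigh.trans_le (pow_le_one₀ hq₀.le hq₁.le)⟩
  · rintro ⟨hv₀, hv₁⟩
    classical
    have hex : ∃ n, q ^ n ≤ v := (exists_pow_lt_of_lt_one hv₀ hq₁).imp fun _ => le_of_lt
    obtain ⟨i, hi⟩ : ∃ i, Nat.find hex = i + 1 :=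
      Nat.exists_eq_add_one.2 (Nat.pos_of_ne_zero fun h => by
        have := Nat.find_spec hex; rw [h, pow_zero] at this; linarith)
    exact ⟨i, hi ▸ Nat.find_spec hex, not_le.1 (Nat.find_min hex (by omega))⟩

lemma map_realOdo_restrict_carryInterval (hp : 1 < p) (i : ℕ) :
    (volume.restrict (carryInterval p i)).map (realOdo p) =
      volume.restrict (Ico ((p : ℝ)⁻¹ ^ (i + 1)) ((p : ℝ)⁻¹ ^ i)) := by
  have hpre : (· + carryShift p i) ⁻¹' Ico ((p : ℝ)⁻¹ ^ (i + 1)) ((p : ℝ)⁻¹ ^ i) =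
      carryInterval p i :=
    ext fun _ => add_carryShift_mem_Ico_iff
  have hae : realOdo p =ᵐ[volume.restrict (carryInterval p i)] (· + carryShift p i) :=
    ae_restrict_of_forall_mem measurableSet_Ico fun _ hu => realOdo_eq_of_mem_carryInterval hp hu
  rw [Measure.map_congr hae, ← hpre]
  exact ((measurePreserving_add_right volume _).restrict_preimage measurableSet_Ico).map_eq

lemma measurable_realOdo : Measurable (realOdo p) :=
  measurable_id.add ((measurable_of_countable (carryShift p)).comp
    (measurable_firstNot.comp measurable_digitsOf))

lemma measurePreserving_realOdo (hp : 1 < p) :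
    MeasurePreserving (realOdo p) (volume.restrict (Ico 0 1)) (volume.restrict (Ico 0 1)) := by
  have hq₀ : (0 : ℝ) < (p : ℝ)⁻¹ := by positivity
  have hq₁ : (p : ℝ)⁻¹ < 1 := inv_lt_one_of_one_lt₀ (Nat.one_lt_cast.2 hp)
  have hcover : ⋃ i, carryInterval p i = Ico 0 1 :=
    (iUnion_subset carryInterval_subset).antisymm fun u hu =>
      mem_iUnion.2 ⟨_, mem_carryInterval_firstNot hp hu⟩
  have hdisj : Pairwise (Disjoint on fun i : ℕ => Ico ((p : ℝ)⁻¹ ^ (i + 1)) ((p : ℝ)⁻¹ ^ i)) :=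
    Antitone.pairwise_disjoint_on_Ico_succ (pow_right_anti₀ hq₀.le hq₁.le)
  refine ⟨measurable_realOdo, ?_⟩
  calc (volume.restrict (Ico 0 1)).map (realOdo p)
      = (Measure.sum fun i => volume.restrict (carryInterval p i)).map (realOdo p) := by
        rw [← hcover, Measure.restrict_iUnion pairwise_disjoint_carryInterval
          fun _ => measurableSet_Ico]
    _ = Measure.sum fun i => volume.restrict (Ico ((p : ℝ)⁻¹ ^ (i + 1)) ((p : ℝ)⁻¹ ^ i)) := by
        rw [Measure.map_sum measurable_realOdo.aemeasurable]
        simp only [map_realOdo_restrict_carryInterval hp]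
    _ = volume.restrict (Ioo 0 1) := by
        rw [← Measure.restrict_iUnion hdisj fun _ => measurableSet_Ico,
          iUnion_Ico_pow_succ_pow hq₀ hq₁]
    _ = volume.restrict (Ico 0 1) := Measure.restrict_congr_set Ioo_ae_eq_Ico

lemma measurePreserving_one_sub :
    MeasurePreserving (fun u : ℝ => 1 - u) (volume.restrict (Ico 0 1))
      (volume.restrict (Ico 0 1)) := by
  have h := (volume.measurePreserving_sub_left (1 : ℝ)).restrict_preimage
    (measurableSet_Ico (a := (0 : ℝ)) (b := 1))
  have hpre : (fun u : ℝ => 1 - u) ⁻¹' Ico 0 1 = Ioc 0 1 := by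
    ext u
    simp only [mem_preimage, mem_Ico, mem_Ioc]
    constructor <;> rintro ⟨h₁, h₂⟩ <;> constructor <;> linarith
  rwa [hpre, Measure.restrict_congr_set Ico_ae_eq_Ioc.symm] at h

lemma ae_digitsOf_one_sub (hp : 0 < p) : ∀ᵐ u ∂volume.restrict (Ico (0 : ℝ) 1),
    digitsOf p (1 - u) = digitCompl p (digitsOf p u) := by
  have hirr : ∀ᵐ u : ℝ, ∀ k : ℕ, u * (p : ℝ) ^ k ∉ range ((↑) : ℤ → ℝ) :=
    ae_all_iff.2 fun k => ((countable_range _).preimage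
      (mul_left_injective₀ (by positivity : (p : ℝ) ^ k ≠ 0))).ae_notMem volume
  filter_upwards [ae_restrict_mem measurableSet_Ico, ae_restrict_of_ae hirr] with u hu hu'
  exact digitsOf_one_sub hp (Ico_subset_Icc_self hu) hu'

lemma measurePreserving_odo (hp : 1 < p) : MeasurePreserving (odo p) (lam p) (lam p) :=
  measurePreserving_map_of_ae_semiconj measurable_digitsOf measurable_odo
    (measurePreserving_realOdo hp)
    (ae_restrict_of_forall_mem measurableSet_Ico fun _ hu => digitsOf_realOdo hp hu)

lemma measurePreserving_digitCompl (hp : 0 < p) :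
    MeasurePreserving (digitCompl p) (lam p) (lam p) :=
  measurePreserving_map_of_ae_semiconj measurable_digitsOf measurable_digitCompl
    measurePreserving_one_sub (ae_digitsOf_one_sub hp)

end Lebesgue

lemma pim_eq_pim_sub {p m j : ℕ} (hp : 1 < p) (hj : j ≤ m * (p - 2)) :
    pim p m j = pim p m (m * (p - 2) - j) := by
  set R := digitCompl p ∘ (odo p)^[m]
  have hR : MeasurePreserving R (lam p) (lam p) :=
    (measurePreserving_digitCompl (Nat.zero_lt_of_lt hp)).comp
      ((measurePreserving_odo hp).iterate m)
  have hpre : digitsOf p ⁻¹' {x | phiSum p m x = j} =ᵐ[volume.restrict (Ico 0 1)]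
      digitsOf p ⁻¹' (R ⁻¹' {x | phiSum p m x = m * (p - 2) - j}) := by
    filter_upwards [ae_restrict_of_forall_mem measurableSet_Ico
      fun _ hu => digitsOf_mem_gammaStar hp hu] with u hu
    have := phiSum_add_phiSum_digitCompl hu m
    rw [eq_iff_iff]
    change phiSum p m (digitsOf p u) = j ↔
      phiSum p m (digitCompl p ((odo p)^[m] (digitsOf p u))) = m * (p - 2) - j
    omega
  have hmeas : ∀ i, MeasurableSet {x | phiSum p m x = i} :=
    fun i => measurable_phiSum m (measurableSet_singleton i)
  rw [pim, pim, lam, Measure.map_apply measurable_digitsOf (hmeas j), measure_congr hpre,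
    ← Measure.map_apply measurable_digitsOf (hR.measurable (hmeas _)), ← lam,
    hR.measure_preimage (hmeas _).nullMeasurableSet]

lemma pow_mul_sum_inv_pow_eq_of_symm {K : Type*} [Field K] {a : ℕ → K} {M : ℕ}
    (ha : ∀ j ≤ M, a j = a (M - j)) {t : K} (ht : t ≠ 0) :
    t ^ M * ∑ j ∈ Finset.range (M + 1), a j * t⁻¹ ^ j =
      ∑ j ∈ Finset.range (M + 1), a j * t ^ j := by
  rw [Finset.mul_sum, ← Finset.sum_range_reflect]
  refine Finset.sum_congr rfl fun j hj => ?_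
  have hj : j ≤ M := Nat.lt_succ_iff.1 (Finset.mem_range.1 hj)
  rw [show M + 1 - 1 - j = M - j by omega, ← ha j hj, ← pow_mul_pow_sub t hj, inv_pow]
  field_simp

/-- the polynomials `P_m^p` are palindromic: `π_m(j) = π_m(m(p-2) - j)`
for all `0 ≤ j ≤ m(p-2)`; equivalently `t^{m(p-2)} P_m^p(1/t) = P_m^p(t)`. -/
theorem statement_4 (p : ℕ) (hp : 3 ≤ p) :
    (∀ m j : ℕ, j ≤ m * (p - 2) → pim p m j = pim p m (m * (p - 2) - j)) ∧
    (∀ m : ℕ, ∀ t : ℝ, t ≠ 0 → t ^ (m * (p - 2)) * P p m t⁻¹ = P p m t) := by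
  have hsymm : ∀ m j : ℕ, j ≤ m * (p - 2) → pim p m j = pim p m (m * (p - 2) - j) :=
    fun m j hj => pim_eq_pim_sub (by omega) hj
  exact ⟨hsymm, fun m t ht =>
    pow_mul_sum_inv_pow_eq_of_symm (fun j hj => by rw [hsymm m j hj]) ht⟩

end Chacon
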